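/- arXiv:2309.01349 — 3 statements merged into one kernel-verified Lean document; each statement's English description precedes it below -/
import Mathlib

section
/- The map Φ : H(SO) \ {0} → [0,∞) × (0,∞) sending the homomorphism c · δ_x to (x, c) is a homeomorphism, where H(SO) \ {0} carries the subspace topology of the product topology on ℝ^SO. -/
open Filter Metric Set

noncomputable section

/-- A continuous function on the half-line `[0,∞)` (modeled as `ℝ≥0`) is
slowly oscillating if for every `R > 0` and `ε > 0` there is `M > 0` with
`diam f([x, x+R]) < ε` for all `x > M`. -/
def SO (f : NNReal → ℝ) : Prop :=
  Continuous f ∧ ∀ R : NNReal, 0 < R → ∀ ε : ℝ, 0 < ε → ∃ M : NNReal, 0 < M ∧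
    ∀ x : NNReal, M < x → Metric.diam (f '' Set.Icc x (x + R)) < ε

/-- A lattice-linear homomorphism of the vector lattice `SO`, encoded as a
function on all of `NNReal → ℝ` whose homomorphism properties are required on
slowly oscillating functions. -/
def IsHom (φ : (NNReal → ℝ) → ℝ) : Prop :=
  (∀ f g : NNReal → ℝ, SO f → SO g → ∀ c d : ℝ,
      φ (c • f + d • g) = c * φ f + d * φ g) ∧
  (∀ f g : NNReal → ℝ, SO f → SO g → φ (f ⊔ g) = φ f ⊔ φ g) ∧
  (∀ f g : NNReal → ℝ, SO f → SO g → φ (f ⊓ g) = φ f ⊓ φ g)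

/-- The vector lattice of slowly oscillating continuous functions. -/
abbrev SOF := {f : NNReal → ℝ // SO f}

/-- Lattice-linear homomorphisms `SO → ℝ`. -/
def IsHomS (φ : SOF → ℝ) : Prop :=
  (∀ f g h : SOF, ∀ c d : ℝ, h.1 = c • f.1 + d • g.1 → φ h = c * φ f + d * φ g) ∧
  (∀ f g h : SOF, h.1 = f.1 ⊔ g.1 → φ h = φ f ⊔ φ g) ∧
  (∀ f g h : SOF, h.1 = f.1 ⊓ g.1 → φ h = φ f ⊓ φ g)

/-- The space `H(SO)` of all homomorphisms, with the topology of pointwise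
convergence inherited from `ℝ^SO`. -/
abbrev HSO := {φ : SOF → ℝ // IsHomS φ}

/-- The evaluation homomorphism `δ_x`. -/
def evalHom (x : NNReal) : HSO :=
  ⟨fun f => f.1 x, by
    refine ⟨?_, ?_, ?_⟩
    · intro f g h c d he; simp [he]
    · intro f g h he; simp [he]
    · intro f g h he; simp [he]⟩


namespace SO13

open Bornology

lemma osc_le {f : NNReal → ℝ} (hf : Continuous f) {x y a b : NNReal}
    (ha : a ∈ Icc x y) (hb : b ∈ Icc x y) :
    dist (f a) (f b) ≤ diam (f '' Icc x y) :=
  dist_le_diam_of_mem ((isCompact_Icc.image hf).isBounded)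
    (mem_image_of_mem _ ha) (mem_image_of_mem _ hb)

lemma diam_image_le_of_monotone {v : NNReal → ℝ} (hv : Monotone v) {x y : NNReal}
    (hxy : x ≤ y) : diam (v '' Icc x y) ≤ v y - v x := by
  apply diam_le_of_forall_dist_le (sub_nonneg.2 (hv hxy))
  rintro p ⟨a, ha, rfl⟩ q ⟨b, hb, rfl⟩
  rw [Real.dist_eq, abs_sub_le_iff]
  have h1 := hv ha.1; have h2 := hv ha.2; have h3 := hv hb.1; have h4 := hv hb.2
  constructor <;> linarith

lemma SO.comb {f g : NNReal → ℝ} (hf : SO f) (hg : SO g) (op : ℝ → ℝ → ℝ)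
    (hop : Continuous fun p : ℝ × ℝ => op p.1 p.2)
    (hd : ∀ a b c d : ℝ, dist (op a b) (op c d) ≤ dist a c + dist b d) :
    SO (fun x => op (f x) (g x)) := by
  constructor
  · exact hop.comp (hf.1.prodMk hg.1)
  · intro R hR ε hε
    obtain ⟨M₁, hM₁, h1⟩ := hf.2 R hR (ε/3) (by positivity)
    obtain ⟨M₂, hM₂, h2⟩ := hg.2 R hR (ε/3) (by positivity)
    refine ⟨max M₁ M₂, lt_max_iff.2 (Or.inl hM₁), fun x hx => ?_⟩
    have hx1 : M₁ < x := lt_of_le_of_lt (le_max_left _ _) hx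
    have hx2 : M₂ < x := lt_of_le_of_lt (le_max_right _ _) hx
    have : diam ((fun x => op (f x) (g x)) '' Icc x (x + R)) ≤ ε/3 + ε/3 := by
      apply diam_le_of_forall_dist_le (by positivity)
      rintro p ⟨a, ha, rfl⟩ q ⟨b, hb, rfl⟩
      calc dist (op (f a) (g a)) (op (f b) (g b))
          ≤ dist (f a) (f b) + dist (g a) (g b) := hd _ _ _ _
        _ ≤ ε/3 + ε/3 := by
            exact add_le_add (le_of_lt (lt_of_le_of_lt (osc_le hf.1 ha hb) (h1 x hx1)))
              (le_of_lt (lt_of_le_of_lt (osc_le hg.1 ha hb) (h2 x hx2)))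
    linarith

lemma SO.add' {f g : NNReal → ℝ} (hf : SO f) (hg : SO g) : SO (fun x => f x + g x) :=
  SO.comb hf hg (· + ·) (continuous_fst.add continuous_snd) dist_add_add_le

lemma SO.sup' {f g : NNReal → ℝ} (hf : SO f) (hg : SO g) : SO (fun x => max (f x) (g x)) :=
  SO.comb hf hg max (continuous_fst.max continuous_snd) (fun a b c d => by
    rw [Real.dist_eq, Real.dist_eq, Real.dist_eq]
    exact le_trans (abs_max_sub_max_le_max a b c d)
      (max_le (le_add_of_nonneg_right (abs_nonneg _)) (le_add_of_nonneg_left (abs_nonneg _))))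

lemma SO.inf' {f g : NNReal → ℝ} (hf : SO f) (hg : SO g) : SO (fun x => min (f x) (g x)) :=
  SO.comb hf hg min (continuous_fst.min continuous_snd) (fun a b c d => by
    rw [Real.dist_eq, Real.dist_eq, Real.dist_eq]
    exact le_trans (abs_min_sub_min_le_max a b c d)
      (max_le (le_add_of_nonneg_right (abs_nonneg _)) (le_add_of_nonneg_left (abs_nonneg _))))

lemma SO.smul' (c : ℝ) {f : NNReal → ℝ} (hf : SO f) : SO (fun x => c * f x) := by
  constructor
  · exact continuous_const.mul hf.1
  · intro R hR ε hε
    obtain ⟨M, hM, h1⟩ := hf.2 R hR (ε/(|c|+1)) (by positivity)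
    refine ⟨M, hM, fun x hx => ?_⟩
    have : diam ((fun x => c * f x) '' Icc x (x + R)) ≤ |c| * (ε/(|c|+1)) := by
      apply diam_le_of_forall_dist_le (by positivity)
      rintro p ⟨a, ha, rfl⟩ q ⟨b, hb, rfl⟩
      rw [Real.dist_eq, ← mul_sub, abs_mul]
      have := le_of_lt (lt_of_le_of_lt (osc_le hf.1 ha hb) (h1 x hx))
      rw [Real.dist_eq] at this
      exact mul_le_mul_of_nonneg_left this (abs_nonneg c)
    have h2 : |c| * (ε/(|c|+1)) < ε := by
      rw [mul_div_assoc']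
      rw [div_lt_iff₀ (by positivity)]
      nlinarith [abs_nonneg c]
    linarith

lemma SO.const (r : ℝ) : SO (fun _ => r) := by
  refine ⟨continuous_const, fun R hR ε hε => ⟨1, one_pos, fun x _ => ?_⟩⟩
  have : ((fun _ => r) '' Icc x (x + R)).Subsingleton := by
    rintro p ⟨a, _, rfl⟩ q ⟨b, _, rfl⟩; rfl
  rw [Metric.diam_subsingleton this]; exact hε

lemma SO.clamp (n : NNReal) : SO (fun x => min (x : ℝ) n) := by
  constructor
  · exact (NNReal.continuous_coe).min continuous_const
  · intro R hR ε hε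
    refine ⟨n + 1, by positivity, fun x hx => ?_⟩
    have : ((fun x : NNReal => min (x : ℝ) n) '' Icc x (x + R)).Subsingleton := by
      rintro p ⟨a, ha, rfl⟩ q ⟨b, hb, rfl⟩
      have hna : (n : ℝ) ≤ a := by
        have : n ≤ a := le_trans (le_trans (le_add_right le_rfl : n ≤ n+1) hx.le) ha.1
        exact_mod_cast this
      have hnb : (n : ℝ) ≤ b := by
        have : n ≤ b := le_trans (le_trans (le_add_right le_rfl : n ≤ n+1) hx.le) hb.1
        exact_mod_cast this
      simp [min_eq_right hna, min_eq_right hnb]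
    rw [Metric.diam_subsingleton this]; exact hε

lemma SO.sqrt : SO (fun x : NNReal => Real.sqrt x) := by
  constructor
  · exact Real.continuous_sqrt.comp NNReal.continuous_coe
  · intro R hR ε hε
    refine ⟨(((R : ℝ)/ε)^2).toNNReal + 1, add_pos_of_nonneg_of_pos zero_le one_pos, fun x hx => ?_⟩
    have hmono : Monotone (fun y : NNReal => Real.sqrt (y : ℝ)) :=
      fun a b h => Real.sqrt_le_sqrt (NNReal.coe_le_coe.2 h)
    refine lt_of_le_of_lt (diam_image_le_of_monotone hmono le_self_add) ?_
    have hcoe : (((R : ℝ)/ε)^2).toNNReal < x := lt_of_le_of_lt (le_add_right le_rfl) hx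
    have hx2 : ((R : ℝ)/ε)^2 < (x : ℝ) := by
      have := NNReal.coe_lt_coe.2 hcoe
      rwa [Real.coe_toNNReal _ (by positivity)] at this
    have hx' : (R : ℝ)/ε < Real.sqrt x := by
      rw [Real.lt_sqrt (by positivity)]; exact hx2
    have h0 : 0 < Real.sqrt x := lt_of_le_of_lt (by positivity) hx'
    have hR' : (R : ℝ) < ε * Real.sqrt x := by
      rw [div_lt_iff₀ hε] at hx'; linarith
    have h1 : Real.sqrt ((x : ℝ) + R) ^ 2 = (x : ℝ) + R := Real.sq_sqrt (by positivity)
    have h2 : Real.sqrt (x : ℝ) ^ 2 = (x : ℝ) := Real.sq_sqrt (by positivity)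
    have hss : Real.sqrt (x : ℝ) ≤ Real.sqrt ((x : ℝ) + R) :=
      Real.sqrt_le_sqrt (le_add_of_nonneg_right R.coe_nonneg)
    have hkey : (Real.sqrt ((x : ℝ) + R) - Real.sqrt x) * (Real.sqrt ((x : ℝ) + R) + Real.sqrt x) = R := by
      nlinarith
    have : ((x + R : NNReal) : ℝ) = (x : ℝ) + R := by push_cast; ring
    rw [this]
    nlinarith

/-! ### SOF elements and operations -/

def cS (r : ℝ) : SOF := ⟨fun _ => r, SO.const r⟩

def addS (f g : SOF) : SOF := ⟨fun x => f.1 x + g.1 x, SO.add' f.2 g.2⟩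

def smulS (c : ℝ) (f : SOF) : SOF := ⟨fun x => c * f.1 x, SO.smul' c f.2⟩

def supS (f g : SOF) : SOF := ⟨fun x => max (f.1 x) (g.1 x), SO.sup' f.2 g.2⟩

def negS (f : SOF) : SOF := ⟨fun x => -(f.1 x), by
  have := SO.smul' (-1) f.2; simpa [neg_one_mul] using this⟩

def subS (f g : SOF) : SOF := ⟨fun x => f.1 x - g.1 x, by
  have := SO.add' f.2 (negS g).2; simpa [negS, sub_eq_add_neg] using this⟩

def absS (f : SOF) : SOF := ⟨fun x => |f.1 x|, by
  have := SO.sup' f.2 (negS f).2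
  simp only [negS] at this
  have he : (fun x => |f.1 x|) = (fun x => max (f.1 x) (-(f.1 x))) := by
    funext x; exact abs_eq_max_neg
  rw [he]; exact this⟩

def clampS (n : NNReal) : SOF := ⟨fun x => min (x : ℝ) n, SO.clamp n⟩

def sqrtS : SOF := ⟨fun x => Real.sqrt x, SO.sqrt⟩

/-! ### Consequences of `IsHomS` -/

section homlemmas

variable {φ : SOF → ℝ} (hφ : IsHomS φ)
include hφ

lemma φzero : φ (cS 0) = 0 := by
  have := hφ.1 (cS 0) (cS 0) (cS 0) 0 0 (by funext x; simp [cS])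
  simpa using this

lemma φadd (f g : SOF) : φ (addS f g) = φ f + φ g := by
  have := hφ.1 f g (addS f g) 1 1 (by funext x; simp [addS])
  simpa using this

lemma φsmul (c : ℝ) (f : SOF) : φ (smulS c f) = c * φ f := by
  have := hφ.1 f (cS 0) (smulS c f) c 0 (by funext x; simp [smulS, cS])
  simpa using this

lemma φconst (r : ℝ) : φ (cS r) = r * φ (cS 1) := by
  have := hφ.1 (cS 1) (cS 0) (cS r) r 0 (by funext x; simp [cS])
  simpa using this

lemma φsup (f g : SOF) : φ (supS f g) = max (φ f) (φ g) := by
  have := hφ.2.1 f g (supS f g) (by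
    funext x; simp only [supS, Pi.sup_apply])
  simpa using this

lemma φneg (f : SOF) : φ (negS f) = -φ f := by
  have := hφ.1 f (cS 0) (negS f) (-1) 0 (by funext x; simp [negS, cS])
  simpa using this

lemma φsub (f g : SOF) : φ (subS f g) = φ f - φ g := by
  have := hφ.1 f g (subS f g) 1 (-1) (by funext x; simp [subS, cS]; ring)
  simpa [sub_eq_add_neg] using this

lemma φabs (f : SOF) : φ (absS f) = |φ f| := by
  have := hφ.2.1 f (negS f) (absS f) (by
    funext x
    simp only [absS, negS, Pi.sup_apply]
    exact abs_eq_max_neg)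
  rw [this, φneg hφ]
  exact (abs_eq_max_neg (a := φ f)).symm

lemma φnonneg {f : SOF} (hf : ∀ x, 0 ≤ f.1 x) : 0 ≤ φ f := by
  have := hφ.2.1 f (cS 0) f (by
    funext x
    simp only [cS, Pi.sup_apply]
    exact (max_eq_left (hf x)).symm)
  rw [φzero hφ] at this
  rw [this]; exact le_max_right _ _

lemma φmono {f g : SOF} (h : ∀ x, f.1 x ≤ g.1 x) : φ f ≤ φ g := by
  have h1 : φ (subS g f) ≥ 0 := φnonneg hφ (fun x => sub_nonneg.2 (h x))
  have h2 := hφ.1 f (subS g f) g 1 1 (by funext x; simp [subS])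
  rw [h2]; linarith

end homlemmas

/-! ### Running maximum -/

lemma runningMax {g : NNReal → ℝ} (hg : SO g) :
    ∃ u : NNReal → ℝ, SO u ∧ Monotone u ∧ (∀ x, g x ≤ u x) := by
  set u : NNReal → ℝ := fun x => sSup (g '' Icc 0 x) with hu
  have hbdd : ∀ x, BddAbove (g '' Icc 0 x) := fun x => (isCompact_Icc.image hg.1).bddAbove
  have hmem : ∀ x : NNReal, g x ∈ g '' Icc 0 x := fun x => mem_image_of_mem g ⟨zero_le, le_rfl⟩
  have hne : ∀ x : NNReal, (g '' Icc 0 x).Nonempty := fun x => ⟨g x, hmem x⟩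
  have hge : ∀ x, g x ≤ u x := fun x => le_csSup (hbdd x) (hmem x)
  have hmono : Monotone u := fun a b hab =>
    csSup_le_csSup (hbdd b) (hne a) (image_mono (Icc_subset_Icc le_rfl hab))
  have hosc : ∀ x y : NNReal, x ≤ y → u y ≤ u x + diam (g '' Icc x y) := by
    intro x y hxy
    apply csSup_le (hne y)
    rintro v ⟨t, ht, rfl⟩
    rcases le_total t x with htx | hxt
    · exact le_add_of_le_of_nonneg (le_csSup (hbdd x) (mem_image_of_mem g ⟨ht.1, htx⟩))
        diam_nonneg
    · have : g t - g x ≤ diam (g '' Icc x y) := by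
        have := osc_le hg.1 (⟨hxt, ht.2⟩ : t ∈ Icc x y) (⟨le_rfl, hxy⟩ : x ∈ Icc x y)
        rw [Real.dist_eq] at this
        exact le_trans (le_abs_self _) this
      have hgx : g x ≤ u x := hge x
      linarith
  have hcont : Continuous u := by
    rw [continuous_iff_continuousAt]
    intro x₀
    rw [Metric.continuousAt_iff]
    intro ε hε
    obtain ⟨δ, hδ, hδ'⟩ := Metric.continuousAt_iff.1 hg.1.continuousAt (ε/3) (by positivity)
    refine ⟨δ, hδ, fun y hy => ?_⟩
    have key : ∀ a b : NNReal, a ≤ b → dist a x₀ < δ → dist b x₀ < δ →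
        u b - u a ≤ 2 * (ε/3) := by
      intro a b hab hda hdb
      have h1 := hosc a b hab
      have h2 : diam (g '' Icc a b) ≤ 2 * (ε/3) := by
        apply diam_le_of_forall_dist_le (by positivity)
        rintro p ⟨s, hs, rfl⟩ q ⟨t, ht, rfl⟩
        have hmid : ∀ r : NNReal, r ∈ Icc a b → dist r x₀ < δ := by
          intro r hr
          rw [NNReal.dist_eq] at *
          rcases abs_sub_lt_iff.1 hda with ⟨hda1, hda2⟩
          rcases abs_sub_lt_iff.1 hdb with ⟨hdb1, hdb2⟩
          have h3 : (a:ℝ) ≤ r := NNReal.coe_le_coe.2 hr.1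
          have h4 : (r:ℝ) ≤ b := NNReal.coe_le_coe.2 hr.2
          rw [abs_sub_lt_iff]
          constructor <;> linarith
        have hs' := hδ' (hmid s hs)
        have ht' := hδ' (hmid t ht)
        calc dist (g s) (g t) ≤ dist (g s) (g x₀) + dist (g x₀) (g t) := dist_triangle _ _ _
          _ ≤ ε/3 + ε/3 := add_le_add hs'.le (by rw [dist_comm]; exact ht'.le)
          _ = 2 * (ε/3) := by ring
      linarith
    have hd0 : dist x₀ x₀ < δ := by rw [dist_self]; exact hδ
    rcases le_total y x₀ with hyx | hxy
    · have hk := key y x₀ hyx hy hd0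
      have hle := hmono hyx
      rw [Real.dist_eq, abs_sub_lt_iff]
      constructor <;> linarith
    · have hk := key x₀ y hxy hd0 hy
      have hle := hmono hxy
      rw [Real.dist_eq, abs_sub_lt_iff]
      constructor <;> linarith
  exact ⟨u, ⟨hcont, by
    intro R hR ε hε
    obtain ⟨M, hM, h1⟩ := hg.2 R hR (ε/2) (by positivity)
    refine ⟨M, hM, fun x hx => ?_⟩
    have hle : u (x + R) - u x ≤ diam (g '' Icc x (x + R)) := by
      have := hosc x (x + R) le_self_add; linarith
    calc diam (u '' Icc x (x + R)) ≤ u (x + R) - u x :=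
          diam_image_le_of_monotone hmono le_self_add
      _ ≤ diam (g '' Icc x (x + R)) := hle
      _ < ε := lt_of_lt_of_le (h1 x hx) (by linarith)⟩, hmono, hge⟩

/-! ### Superdominating function -/

lemma superdominate {u : NNReal → ℝ} (hu : SO u) (hm : Monotone u) (h0 : ∀ x, 0 ≤ u x)
    (hub : ∀ r : ℝ, ∃ p : NNReal, r < u p) :
    ∃ w : NNReal → ℝ, SO w ∧ (∀ x, 0 ≤ w x) ∧
      ∃ b : ℕ → ℝ, ∀ k : ℕ, 1 ≤ k → ∀ x, (k:ℝ) * u x ≤ w x + (k:ℝ) * b k := by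
  classical
  have hM : ∀ k : ℕ, ∃ M : NNReal, ∀ x, M < x →
      diam (u '' Icc x (x + ((k:NNReal)+1))) < 1/((k:ℝ)+1)^3 := by
    intro k
    obtain ⟨M, _, hM⟩ := hu.2 ((k:NNReal)+1) (by positivity) (1/((k:ℝ)+1)^3) (by positivity)
    exact ⟨M, hM⟩
  choose M hMspec using hM
  have htall : ∀ q : ℝ, ∃ p : NNReal, q + 1 ≤ u p := fun q => (hub (q+1)).imp (fun p h => h.le)
  choose tall htallspec using htall
  let step : ℕ → NNReal → NNReal := fun k p => max (max (tall (u p)) (M k + ((k:NNReal)+1) + 1)) (p+1)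
  let z : ℕ → NNReal := fun n => Nat.rec 0 step n
  have hz1 : ∀ k, z k + 1 ≤ z (k+1) := fun k => le_max_right _ _
  have hztall : ∀ k, tall (u (z k)) ≤ z (k+1) := fun k => le_trans (le_max_left _ _) (le_max_left _ _)
  have hzM : ∀ k, M k + ((k:NNReal)+1) + 1 ≤ z (k+1) := fun k =>
    le_trans (le_max_right _ _) (le_max_left _ _)
  have hzmono : Monotone z := monotone_nat_of_le_succ
    (fun n => le_trans (le_add_right le_rfl) (hz1 n))
  set b : ℕ → ℝ := fun k => u (z k) with hbdef
  have hb1 : ∀ k, b k + 1 ≤ b (k+1) := fun k =>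
    le_trans (htallspec (u (z k))) (hm (hztall k))
  have hzk : ∀ k : ℕ, (k : NNReal) ≤ z k := by
    intro k; induction k with
    | zero => simp
    | succ n ih =>
        have h1 : ((n:NNReal)+1) ≤ z n + 1 := add_le_add_left ih 1
        have := le_trans h1 (hz1 n)
        push_cast
        exact this
  have hbk : ∀ k : ℕ, (k:ℝ) ≤ b k := by
    intro k; induction k with
    | zero => simpa using h0 (z 0)
    | succ n ih => push_cast; linarith [hb1 n]
  have hbmono : Monotone b := fun i j hij => hm (hzmono hij)
  have hMz : ∀ (j : ℕ) (x : NNReal), z (j+1) ≤ x + ((j:NNReal)+1) →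
      diam (u '' Icc x (x + ((j:NNReal)+1))) < 1/((j:ℝ)+1)^3 := by
    intro j x hx
    apply hMspec j x
    have h1 : M j + ((j:NNReal)+1) + 1 ≤ x + ((j:NNReal)+1) := le_trans (hzM j) hx
    have h2 : M j + 1 ≤ x := by
      have h3 : (M j + 1) + ((j:NNReal)+1) ≤ x + ((j:NNReal)+1) := by
        calc (M j + 1) + ((j:NNReal)+1) = M j + ((j:NNReal)+1) + 1 := by ring
          _ ≤ x + ((j:NNReal)+1) := h1
      exact le_of_add_le_add_right h3
    exact lt_of_lt_of_le (lt_add_of_pos_right _ one_pos) h2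
  set G : ℕ → NNReal → ℝ := fun k x => max (u x - b (k+1)) 0 with hGdef
  have hGnonneg : ∀ k x, 0 ≤ G k x := fun k x => le_max_right _ _
  have hGmono : ∀ k, Monotone (G k) := fun k a c hac =>
    max_le_max (by have := hm hac; linarith) le_rfl
  have hGzero : ∀ (k : ℕ) (x : NNReal), u x ≤ (k:ℝ)+1 → G k x = 0 := by
    intro k x hx; apply max_eq_right
    have := hbk (k+1); push_cast at this; linarith
  have hsummable : ∀ x, Summable (fun k => G k x) := by
    intro x
    apply summable_of_ne_finset_zero (s := Finset.range (Nat.ceil (u x)))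
    intro k hk
    rw [Finset.mem_range, not_lt] at hk
    apply hGzero
    calc u x ≤ (Nat.ceil (u x) : ℝ) := Nat.le_ceil _
      _ ≤ (k:ℝ) := by exact_mod_cast hk
      _ ≤ (k:ℝ)+1 := by linarith
  set w : NNReal → ℝ := fun x => u x + ∑' k, G k x with hwdef
  have htsum : ∀ (x : NNReal) (N : ℕ), u x ≤ (N:ℝ) →
      ∑' k, G k x = ∑ k ∈ Finset.range N, G k x := by
    intro x N hN
    apply tsum_eq_sum
    intro k hk
    rw [Finset.mem_range, not_lt] at hk
    refine hGzero k x ?_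
    calc u x ≤ (N:ℝ) := hN
      _ ≤ (k:ℝ) := by exact_mod_cast hk
      _ ≤ (k:ℝ)+1 := by linarith
  have hwmono : Monotone w := by
    intro a c hac
    exact add_le_add (hm hac) ((hsummable a).tsum_le_tsum (fun k => hGmono k hac) (hsummable c))
  have hw0 : ∀ x, 0 ≤ w x := fun x => add_nonneg (h0 x) (tsum_nonneg (fun k => hGnonneg k x))
  have hdom : ∀ k : ℕ, 1 ≤ k → ∀ x, (k:ℝ) * u x ≤ w x + (k:ℝ) * b (k+1) := by
    intro k hk x
    have hsum_ge : (k:ℝ) * (u x - b (k+1)) ≤ ∑' i, G i x := by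
      have h1 : ∀ i ∈ Finset.range k, u x - b (k+1) ≤ G i x := by
        intro i hi
        rw [Finset.mem_range] at hi
        have h2 : b (i+1) ≤ b (k+1) := hbmono (Nat.succ_le_succ hi.le)
        exact le_trans (by linarith) (le_max_left _ _)
      have h2 : (k:ℝ) * (u x - b (k+1)) ≤ ∑ i ∈ Finset.range k, G i x := by
        calc (k:ℝ) * (u x - b (k+1)) = ∑ _i ∈ Finset.range k, (u x - b (k+1)) := by
              rw [Finset.sum_const, Finset.card_range, nsmul_eq_mul]
          _ ≤ _ := Finset.sum_le_sum h1
      exact le_trans h2 ((hsummable x).sum_le_tsum _ (fun i _ => hGnonneg i x))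
    have h3 := h0 x
    have h4 : w x = u x + ∑' i, G i x := rfl
    linarith
  have hwcont : Continuous w := by
    rw [continuous_iff_continuousAt]
    intro x₀
    set N := Nat.ceil (u x₀) + 1 with hN
    have hopen : IsOpen {y : NNReal | u y < (N:ℝ)} := isOpen_lt hu.1 continuous_const
    have hx₀ : x₀ ∈ {y : NNReal | u y < (N:ℝ)} := by
      simp only [mem_setOf_eq, hN]; push_cast
      exact lt_of_le_of_lt (Nat.le_ceil _) (by linarith)
    have hcont2 : Continuous (fun y => u y + ∑ k ∈ Finset.range N, G k y) :=
      hu.1.add (continuous_finset_sum _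
        (fun k _ => (hu.1.sub continuous_const).max continuous_const))
    apply hcont2.continuousAt.congr
    apply Filter.eventuallyEq_of_mem (hopen.mem_nhds hx₀)
    intro y hy
    show (fun y => u y + ∑ k ∈ Finset.range N, G k y) y = w y
    exact (by rw [show w y = u y + ∑' k, G k y from rfl, htsum y N (le_of_lt hy)] :
      w y = u y + ∑ k ∈ Finset.range N, G k y).symm
  refine ⟨w, ⟨hwcont, ?_⟩, hw0, fun k => b (k+1), hdom⟩
  intro R hR ε hε
  obtain ⟨m₀, hm₀⟩ := exists_nat_gt (max (R:ℝ) (Real.sqrt (2/ε)))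
  set m := m₀ + 1 with hmdef
  have hm1 : 1 ≤ m := Nat.le_add_left 1 m₀
  have hm₀m : (m₀:ℝ) ≤ (m:ℝ) := by rw [hmdef]; push_cast; linarith
  have hmR : (R:ℝ) < m := lt_of_le_of_lt (le_max_left _ _) (lt_of_lt_of_le hm₀ hm₀m)
  have hmpos : (0:ℝ) < m := by positivity
  have hmε : 2/(m:ℝ)^2 < ε := by
    have h1 : Real.sqrt (2/ε) < m :=
      lt_of_le_of_lt (le_max_right _ _) (lt_of_lt_of_le hm₀ hm₀m)
    have h2 : 2/ε < (m:ℝ)^2 := by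
      rw [← Real.sqrt_lt' hmpos]; exact h1
    rw [div_lt_iff₀ (by positivity : (0:ℝ) < (m:ℝ)^2)]
    rw [div_lt_iff₀ hε] at h2
    linarith
  refine ⟨z m + 1, add_pos_of_nonneg_of_pos zero_le one_pos, fun x hx => ?_⟩
  have hzmx : z m < x := lt_of_le_of_lt (le_add_right le_rfl) hx
  set n₀ := Nat.ceil ((x:ℝ) + R) + 1 with hn₀
  set P : ℕ → Prop := fun k => z k < x + R with hPdef
  have hPm : P m := lt_of_lt_of_le hzmx le_self_add
  have hcoexr : ((x + R : NNReal) : ℝ) = (x:ℝ) + R := by push_cast; ring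
  have hmn₀ : m ≤ n₀ := by
    have h2 : ((m:NNReal):ℝ) ≤ (z m : ℝ) := NNReal.coe_le_coe.2 (hzk m)
    have h3 : (z m : ℝ) < ((x + R : NNReal):ℝ) := NNReal.coe_lt_coe.2 hPm
    have h4 : (x:ℝ) + R ≤ (Nat.ceil ((x:ℝ)+R) : ℝ) := Nat.le_ceil _
    have h5 : (m:ℝ) < (n₀:ℝ) := by
      rw [hn₀]; push_cast at h2 h3 ⊢; linarith
    exact le_of_lt (by exact_mod_cast h5)
  set J := @Nat.findGreatest P (Classical.decPred P) n₀ with hJ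
  have hJm : m ≤ J := @Nat.le_findGreatest m P (Classical.decPred P) n₀ hmn₀ hPm
  have hPJ : P J := @Nat.findGreatest_spec m P (Classical.decPred P) n₀ hmn₀ hPm
  have hgt : ∀ k, J < k → ¬ P k := by
    intro k hk hPk
    rcases le_or_gt k n₀ with h | h
    · exact @Nat.findGreatest_is_greatest k P (Classical.decPred P) n₀ hk h hPk
    · have h2' : z k < x + R := hPk
      have h2 := NNReal.coe_lt_coe.2 h2'
      have h3 : (x:ℝ) + R ≤ (Nat.ceil ((x:ℝ)+R):ℝ) := Nat.le_ceil _
      have h4 := NNReal.coe_le_coe.2 (hzk k)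
      have h5 : (n₀:ℝ) < (k:ℝ) := by exact_mod_cast h
      rw [hn₀] at h5
      rw [hcoexr] at h2
      push_cast at h4 h5
      linarith
  have hJ1 : 1 ≤ J := le_trans hm1 hJm
  obtain ⟨j, hj⟩ : ∃ j, J = j + 1 := ⟨J - 1, (Nat.succ_pred_eq_of_pos hJ1).symm⟩
  have hRj : R ≤ (j:NNReal)+1 := by
    rw [← NNReal.coe_le_coe]
    have h6 : (m:ℝ) ≤ (J:ℝ) := by exact_mod_cast hJm
    rw [hj] at h6
    have h7 : (m:ℝ) = (m₀:ℝ) + 1 := by rw [hmdef]; push_cast; ring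
    push_cast at h6 ⊢
    linarith
  set Δ := u (x + R) - u x with hΔ
  have hΔ0 : 0 ≤ Δ := sub_nonneg.2 (hm le_self_add)
  have hΔlt : Δ < 1/(J:ℝ)^3 := by
    have hsub : Icc x (x + R) ⊆ Icc x (x + ((j:NNReal)+1)) :=
      Icc_subset_Icc le_rfl (add_le_add_right hRj x)
    have hd1 : diam (u '' Icc x (x+R)) ≤ diam (u '' Icc x (x + ((j:NNReal)+1))) :=
      diam_mono (image_mono hsub) (isCompact_Icc.image hu.1).isBounded
    have hd2 : diam (u '' Icc x (x + ((j:NNReal)+1))) < 1/((j:ℝ)+1)^3 := by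
      apply hMz j x
      rw [← hj]
      exact le_trans hPJ.le (add_le_add_right hRj x)
    have hΔd : Δ ≤ diam (u '' Icc x (x+R)) := by
      have h7 := osc_le hu.1 (⟨le_self_add, le_rfl⟩ : x + R ∈ Icc x (x+R))
        (⟨le_rfl, le_self_add⟩ : x ∈ Icc x (x+R))
      rw [Real.dist_eq] at h7
      exact le_trans (le_abs_self _) h7
    have hcast : 1/((j:ℝ)+1)^3 = 1/(J:ℝ)^3 := by rw [hj]; push_cast; ring
    rw [← hcast]
    exact lt_of_le_of_lt (le_trans hΔd hd1) hd2
  set N := max J (Nat.ceil (u (x + R))) with hNd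
  have hNu : u (x + R) ≤ (N:ℝ) := le_trans (Nat.le_ceil _)
    (by exact_mod_cast le_max_right J (Nat.ceil (u (x+R))))
  have hNux : u x ≤ (N:ℝ) := le_trans (hm le_self_add) hNu
  have hwx1 : w (x+R) = u (x+R) + ∑ k ∈ Finset.range N, G k (x+R) := by
    rw [show w (x+R) = u (x+R) + ∑' k, G k (x+R) from rfl, htsum _ N hNu]
  have hwx2 : w x = u x + ∑ k ∈ Finset.range N, G k x := by
    rw [show w x = u x + ∑' k, G k x from rfl, htsum _ N hNux]
  have hterm : ∀ k ∈ Finset.range N, k ∉ Finset.range J → G k (x+R) - G k x = 0 := by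
    intro k _ hk
    rw [Finset.mem_range, not_lt] at hk
    have hnP : ¬ P (k+1) := hgt (k+1) (by omega)
    have h8 : x + R ≤ z (k+1) := not_lt.1 hnP
    have hub' : u (x+R) ≤ b (k+1) := hm h8
    have h9 : G k (x+R) = 0 := max_eq_right (by linarith)
    have h10 : G k x = 0 := max_eq_right (by
      have := hm (le_self_add : x ≤ x + R); linarith)
    rw [h9, h10, sub_zero]
  have hdiff : ∑ k ∈ Finset.range N, (G k (x+R) - G k x) ≤ (J:ℝ) * Δ := by
    have hJN : J ≤ N := le_max_left _ _
    rw [← Finset.sum_subset (Finset.range_subset_range.2 hJN) hterm]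
    calc ∑ k ∈ Finset.range J, (G k (x+R) - G k x) ≤ ∑ _k ∈ Finset.range J, Δ := by
          apply Finset.sum_le_sum
          intro i _
          have habs : |G i (x+R) - G i x| ≤ |(u (x+R) - b (i+1)) - (u x - b (i+1))| := by
            have h11 := abs_max_sub_max_le_max (u (x+R) - b (i+1)) 0 (u x - b (i+1)) 0
            simpa [max_eq_left (abs_nonneg ((u (x+R) - b (i+1)) - (u x - b (i+1))))] using h11
          have h12 : |(u (x+R) - b (i+1)) - (u x - b (i+1))| = Δ := by
            rw [hΔ, show (u (x+R) - b (i+1)) - (u x - b (i+1)) = u (x+R) - u x by ring,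
              abs_of_nonneg (by rw [hΔ] at hΔ0; exact hΔ0)]
          exact le_trans (le_abs_self _) (by rw [← h12]; exact habs)
        _ = (J:ℝ) * Δ := by rw [Finset.sum_const, Finset.card_range, nsmul_eq_mul]
  have hwb : w (x+R) - w x ≤ ((J:ℝ)+1) * Δ := by
    rw [hwx1, hwx2]
    have h13 : ∑ k ∈ Finset.range N, G k (x+R) - ∑ k ∈ Finset.range N, G k x
        = ∑ k ∈ Finset.range N, (G k (x+R) - G k x) := (Finset.sum_sub_distrib _ _).symm
    have h14 : u (x+R) - u x = Δ := rfl
    nlinarith [hdiff]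
  calc diam (w '' Icc x (x+R)) ≤ w (x+R) - w x := diam_image_le_of_monotone hwmono le_self_add
    _ ≤ ((J:ℝ)+1) * Δ := hwb
    _ < ((J:ℝ)+1) * (1/(J:ℝ)^3) := mul_lt_mul_of_pos_left hΔlt (by positivity)
    _ ≤ 2/(m:ℝ)^2 := by
        have h1 : (1:ℝ) ≤ (J:ℝ) := by exact_mod_cast hJ1
        have h2 : (m:ℝ) ≤ (J:ℝ) := by exact_mod_cast hJm
        rw [mul_one_div, div_le_div_iff₀ (by positivity) (by positivity)]
        nlinarith [sq_nonneg ((J:ℝ) - (m:ℝ)), sq_nonneg ((J:ℝ)+(m:ℝ))]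
    _ < ε := hmε

/-! ### Localization for positive homomorphisms -/

lemma localize {φ : SOF → ℝ} (hφ : IsHomS φ) (hpos : 0 < φ (cS 1)) :
    ∃ x : NNReal, ∀ f : SOF, φ f = φ (cS 1) * f.1 x := by
  classical
  set c := φ (cS 1) with hc
  have hcne : c ≠ 0 := ne_of_gt hpos
  set F : SOF → SOF := fun f => absS (subS f (cS (φ f / c))) with hFdef
  have hφF : ∀ f, φ (F f) = 0 := by
    intro f
    show φ (absS (subS f (cS (φ f / c)))) = 0
    rw [φabs hφ, φsub hφ, φconst hφ, ← hc, div_mul_cancel₀ _ hcne, sub_self, abs_zero]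
  have hFnn : ∀ (f : SOF) (x : NNReal), 0 ≤ (F f).1 x := fun f x => abs_nonneg _
  set ℓ := φ sqrtS / c with hℓ
  have hsq0 : 0 ≤ φ sqrtS := φnonneg hφ (fun x => Real.sqrt_nonneg _)
  have hℓ0 : 0 ≤ ℓ := div_nonneg hsq0 hpos.le
  have hℓc : ℓ * c = φ sqrtS := div_mul_cancel₀ _ hcne
  set B : SOF := supS (subS sqrtS (cS (ℓ+1))) (cS 0) with hBdef
  have hφB : φ B = 0 := by
    rw [hBdef]
    rw [φsup hφ, φsub hφ, φconst hφ, φzero hφ, ← hc]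
    rw [max_eq_right (by nlinarith)]
  have hBnn : ∀ x, 0 ≤ B.1 x := fun x => le_max_right _ _
  set A : NNReal := ((ℓ+2)^2).toNNReal with hA
  have hBout : ∀ x : NNReal, x ∉ Icc 0 A → 1 ≤ B.1 x := by
    intro x hx
    have hxA : A < x := by
      by_contra hcon
      exact hx ⟨zero_le, not_lt.1 hcon⟩
    have hx2 : (ℓ+2)^2 < (x:ℝ) := by
      have h1 := NNReal.coe_lt_coe.2 hxA
      rwa [hA, Real.coe_toNNReal _ (by positivity)] at h1
    have hsx : ℓ + 2 < Real.sqrt x := by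
      rw [Real.lt_sqrt (by positivity)]; exact hx2
    show 1 ≤ max (Real.sqrt x - (ℓ+1)) 0
    exact le_trans (by linarith) (le_max_left _ _)
  by_contra hcon
  push_neg at hcon
  have hZ : Icc 0 A ∩ ⋂ f : SOF, {x | (F f).1 x = 0} = ∅ := by
    rw [eq_empty_iff_forall_notMem]
    rintro x ⟨_, hxZ⟩
    rw [mem_iInter] at hxZ
    obtain ⟨f, hf⟩ := hcon x
    apply hf
    have h2 : |f.1 x - φ f / c| = 0 := hxZ f
    have h3 : f.1 x = φ f / c := by
      have := abs_eq_zero.1 h2; linarith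
    rw [h3]; field_simp
  obtain ⟨t, ht⟩ := isCompact_Icc.elim_finite_subfamily_closed _
    (fun f : SOF => isClosed_eq (F f).2.1 continuous_const) hZ
  have hbuild : ∀ s : Finset SOF, ∃ h : SOF, φ h = 0 ∧ (∀ x, B.1 x ≤ h.1 x) ∧
      (∀ f ∈ s, ∀ x, (F f).1 x ≤ h.1 x) := by
    intro s
    induction s using Finset.induction_on with
    | empty => exact ⟨B, hφB, fun x => le_rfl, fun f hf => absurd hf (Finset.notMem_empty f)⟩
    | @insert g s' hg ih =>
        obtain ⟨h, hφh, hBh, hfh⟩ := ih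
        have hh0 : ∀ x, 0 ≤ h.1 x := fun x => le_trans (hBnn x) (hBh x)
        refine ⟨addS h (F g), ?_, ?_, ?_⟩
        · rw [φadd hφ, hφh, hφF, add_zero]
        · intro x
          exact le_trans (hBh x) (le_add_of_nonneg_right (hFnn g x))
        · intro f hf x
          rcases Finset.mem_insert.1 hf with rfl | hf'
          · exact le_add_of_nonneg_left (hh0 x)
          · exact le_trans (hfh f hf' x) (le_add_of_nonneg_right (hFnn g x))
  obtain ⟨h, hφh, hBh, hFh⟩ := hbuild t
  have hKne : (Icc (0:NNReal) A).Nonempty := ⟨0, le_rfl, zero_le⟩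
  obtain ⟨x₀, hx₀K, hx₀min⟩ := isCompact_Icc.exists_isMinOn hKne h.2.1.continuousOn
  have hh0 : ∀ x, 0 ≤ h.1 x := fun x => le_trans (hBnn x) (hBh x)
  have hx₀0 : h.1 x₀ = 0 := by
    by_contra hne0
    have hδ : 0 < min (h.1 x₀) 1 := lt_min (lt_of_le_of_ne (hh0 x₀) (Ne.symm hne0)) one_pos
    have hlb : ∀ x, min (h.1 x₀) 1 ≤ h.1 x := by
      intro x
      by_cases hx : x ∈ Icc 0 A
      · exact le_trans (min_le_left _ _) (hx₀min hx)
      · exact le_trans (min_le_right _ _) (le_trans (hBout x hx) (hBh x))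
    have hle : φ (cS (min (h.1 x₀) 1)) ≤ φ h := φmono hφ (fun x => hlb x)
    rw [φconst hφ, ← hc, hφh] at hle
    nlinarith
  rw [eq_empty_iff_forall_notMem] at ht
  apply ht x₀
  refine ⟨hx₀K, ?_⟩
  rw [mem_iInter₂]
  intro f hf
  have h1 : (F f).1 x₀ ≤ 0 := hx₀0 ▸ hFh f hf x₀
  exact le_antisymm h1 (hFnn f x₀)

/-! ### The representation theorem -/

lemma keyA {φ : SOF → ℝ} (hφ : IsHomS φ) (hne : φ ≠ 0) :
    ∃ (x : NNReal) (c : ℝ), 0 < c ∧ ∀ f : SOF, φ f = c * f.1 x := by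
  have hc0 : 0 ≤ φ (cS 1) := φnonneg hφ (fun x => zero_le_one)
  rcases eq_or_lt_of_le hc0 with h0 | hpos
  · exfalso
    have hconst0 : ∀ r : ℝ, φ (cS r) = 0 := by
      intro r; rw [φconst hφ, ← h0, mul_zero]
    have hkill : ∀ (f : SOF) (r : ℝ), (∀ x, |f.1 x| ≤ r) → φ f = 0 := by
      intro f r hfr
      have h1 : φ f ≤ φ (cS r) := φmono hφ (fun x => le_trans (le_abs_self _) (hfr x))
      have h2 : φ (cS (-r)) ≤ φ f := φmono hφ (fun x => (abs_le.1 (hfr x)).1)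
      rw [hconst0 r] at h1; rw [hconst0 (-r)] at h2
      linarith
    obtain ⟨f₀, hf₀⟩ : ∃ f : SOF, φ f ≠ 0 := by
      by_contra hall; push_neg at hall
      exact hne (funext hall)
    set f₁ := absS f₀ with hf₁def
    have ha : 0 < φ f₁ := by
      rw [hf₁def, φabs hφ]; exact abs_pos.2 hf₀
    have hf₁nn : ∀ x, 0 ≤ f₁.1 x := fun x => abs_nonneg _
    have hub1 : ∀ r : ℝ, ∃ x, r < f₁.1 x := by
      intro r
      by_contra hcon; push_neg at hcon
      refine absurd (hkill f₁ (max r 0) (fun x => ?_)) (ne_of_gt ha)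
      rw [abs_of_nonneg (hf₁nn x)]
      exact le_trans (hcon x) (le_max_left _ _)
    obtain ⟨u, hSOu, humono, huge⟩ := runningMax f₁.2
    have hu0 : ∀ x, 0 ≤ u x := fun x => le_trans (hf₁nn x) (huge x)
    have huub : ∀ r : ℝ, ∃ p, r < u p := fun r =>
      (hub1 r).imp (fun x h => lt_of_lt_of_le h (huge x))
    obtain ⟨w, hSOw, hw0, b, hdom⟩ := superdominate hSOu humono hu0 huub
    set uS : SOF := ⟨u, hSOu⟩ with huS
    set wS : SOF := ⟨w, hSOw⟩ with hwS
    have huphi : φ f₁ ≤ φ uS := φmono hφ huge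
    have hkey : ∀ k : ℕ, 1 ≤ k → (k:ℝ) * φ uS ≤ φ wS := by
      intro k hk1
      have hpt : ∀ x, (smulS (k:ℝ) uS).1 x ≤ (addS wS (cS ((k:ℝ) * b k))).1 x := by
        intro x
        simpa [smulS, addS, cS] using hdom k hk1 x
      have hmle := φmono hφ hpt
      rw [φsmul hφ, φadd hφ, hconst0] at hmle
      linarith
    obtain ⟨k, hkgt⟩ := exists_nat_gt (max 1 (φ wS / φ uS))
    have hk1 : 1 ≤ k := by
      have h5 : (1:ℝ) ≤ k := le_trans (le_max_left _ _) hkgt.le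
      exact_mod_cast h5
    have h2 := hkey k hk1
    have h4 : 0 < φ uS := lt_of_lt_of_le ha huphi
    have h3 : φ wS / φ uS < k := lt_of_le_of_lt (le_max_right _ _) hkgt
    rw [div_lt_iff₀ h4] at h3
    nlinarith
  · obtain ⟨x, hx⟩ := localize hφ hpos
    exact ⟨x, φ (cS 1), hpos, hx⟩

lemma uniq {x y : NNReal} {c d : ℝ} (hc : 0 < c)
    (h : ∀ f : SOF, c * f.1 x = d * f.1 y) : x = y ∧ c = d := by
  have h1 := h (cS 1)
  have hcd : c = d := by simpa [cS] using h1
  have h2 := h (clampS (x + y + 1))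
  have hn : ∀ z : NNReal, z ≤ x + y + 1 → (clampS (x+y+1)).1 z = (z:ℝ) := by
    intro z hz
    exact min_eq_left (NNReal.coe_le_coe.2 hz)
  rw [hn x (le_trans le_self_add le_self_add), hn y (le_trans le_add_self le_self_add),
    ← hcd] at h2
  exact ⟨NNReal.coe_injective (mul_left_cancel₀ (ne_of_gt hc) h2), hcd⟩

end SO13

theorem stmt_13 :
    ∃ Φ : {φ : HSO // φ.1 ≠ 0} ≃ₜ NNReal × {c : ℝ // 0 < c},
      ∀ (φ : {φ : HSO // φ.1 ≠ 0}) (x : NNReal) (c : ℝ) (hc : 0 < c),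
        (∀ f : SOF, φ.1.1 f = c * f.1 x) → Φ φ = (x, ⟨c, hc⟩) := by
  classical
  have hΨhom : ∀ (x : NNReal) (c : ℝ), 0 < c → IsHomS (fun f : SOF => c * f.1 x) := by
    intro x c hc
    refine ⟨?_, ?_, ?_⟩
    · intro f g h a d he
      have h1 := congrFun he x
      simp only [Pi.add_apply, Pi.smul_apply, smul_eq_mul] at h1
      show c * h.1 x = a * (c * f.1 x) + d * (c * g.1 x)
      rw [h1]; ring
    · intro f g h he
      have h1 := congrFun he x
      rw [Pi.sup_apply] at h1
      show c * h.1 x = (c * f.1 x) ⊔ (c * g.1 x)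
      rw [h1]
      exact mul_max_of_nonneg _ _ hc.le
    · intro f g h he
      have h1 := congrFun he x
      rw [Pi.inf_apply] at h1
      show c * h.1 x = (c * f.1 x) ⊓ (c * g.1 x)
      rw [h1]
      exact mul_min_of_nonneg _ _ hc.le
  let Ψ : NNReal × {c : ℝ // 0 < c} → {φ : HSO // φ.1 ≠ 0} := fun p =>
    ⟨⟨fun f => p.2.1 * f.1 p.1, hΨhom p.1 p.2.1 p.2.2⟩, by
      intro hzero
      have h1 := congrFun hzero (SO13.cS 1)
      simp only [SO13.cS, Pi.zero_apply, mul_one] at h1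
      exact (ne_of_gt p.2.2) h1⟩
  have hrep : ∀ ψ : {φ : HSO // φ.1 ≠ 0}, ∃ (x : NNReal) (c : ℝ) (_ : 0 < c),
      ∀ f : SOF, ψ.1.1 f = c * f.1 x := by
    intro ψ
    obtain ⟨x, c, hc, h⟩ := SO13.keyA ψ.1.2 ψ.2
    exact ⟨x, c, hc, h⟩
  have hinj : Function.Injective Ψ := by
    intro p q hpq
    have h1 : ∀ f : SOF, p.2.1 * f.1 p.1 = q.2.1 * f.1 q.1 := by
      intro f
      exact congrFun (congrArg (fun (ψ : {φ : HSO // φ.1 ≠ 0}) => ψ.1.1) hpq) f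
    obtain ⟨hxy, hcd⟩ := SO13.uniq p.2.2 h1
    exact Prod.ext hxy (Subtype.ext hcd)
  have hsurj : Function.Surjective Ψ := by
    intro ψ
    obtain ⟨x, c, hc, h⟩ := hrep ψ
    refine ⟨(x, ⟨c, hc⟩), ?_⟩
    apply Subtype.ext; apply Subtype.ext
    funext f
    exact (h f).symm
  let e := Equiv.ofBijective Ψ ⟨hinj, hsurj⟩
  have hcontΨ : Continuous Ψ := by
    apply Continuous.subtype_mk
    apply Continuous.subtype_mk
    apply continuous_pi
    intro f
    exact (continuous_subtype_val.comp continuous_snd).mul (f.2.1.comp continuous_fst)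
  have hpos1 : ∀ ψ : {φ : HSO // φ.1 ≠ 0}, 0 < ψ.1.1 (SO13.cS 1) := by
    intro ψ
    obtain ⟨x, c, hc, h⟩ := hrep ψ
    rw [h (SO13.cS 1)]
    simpa [SO13.cS] using hc
  have hev : ∀ f : SOF, Continuous (fun ψ : {φ : HSO // φ.1 ≠ 0} => ψ.1.1 f) := by
    intro f
    exact (continuous_apply f).comp (continuous_subtype_val.comp continuous_subtype_val)
  have hrepval : ∀ ψ : {φ : HSO // φ.1 ≠ 0}, ∀ f : SOF,
      ψ.1.1 f = (e.symm ψ).2.1 * f.1 (e.symm ψ).1 := by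
    intro ψ f
    have h1 : Ψ (e.symm ψ) = ψ := e.apply_symm_apply ψ
    conv_lhs => rw [← h1]
  have hcontInv : Continuous e.symm := by
    rw [continuous_iff_continuousAt]
    intro ψ₀
    set p₀ := e.symm ψ₀ with hp₀
    set n : NNReal := p₀.1 + 1 with hn
    set U := {ψ : {φ : HSO // φ.1 ≠ 0} |
      ψ.1.1 (SO13.clampS n) < (n:ℝ) * ψ.1.1 (SO13.cS 1)} with hU
    have hUopen : IsOpen U := isOpen_lt (hev _) (continuous_const.mul (hev _))
    have hxn : (p₀.1 : ℝ) < (n:ℝ) := by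
      rw [hn]; push_cast; linarith
    have hmemU : ψ₀ ∈ U := by
      rw [hU, mem_setOf_eq, hrepval ψ₀ (SO13.clampS n), hrepval ψ₀ (SO13.cS 1)]
      show p₀.2.1 * min ((p₀.1:ℝ)) (n:ℝ) < (n:ℝ) * (p₀.2.1 * 1)
      rw [min_eq_left hxn.le, mul_one]
      calc p₀.2.1 * p₀.1 < p₀.2.1 * n := mul_lt_mul_of_pos_left hxn p₀.2.2
        _ = (n:ℝ) * p₀.2.1 := mul_comm _ _
    set Fm : {φ : HSO // φ.1 ≠ 0} → NNReal × {c : ℝ // 0 < c} := fun ψ =>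
      (Real.toNNReal (ψ.1.1 (SO13.clampS n) / ψ.1.1 (SO13.cS 1)),
        ⟨ψ.1.1 (SO13.cS 1), hpos1 ψ⟩) with hFm
    have hcontF : Continuous Fm := by
      apply Continuous.prodMk
      · exact continuous_real_toNNReal.comp
          ((hev _).div (hev _) (fun ψ => ne_of_gt (hpos1 ψ)))
      · exact Continuous.subtype_mk (hev _) _
    have heqU : ∀ ψ ∈ U, Fm ψ = e.symm ψ := by
      intro ψ hψ
      have hv := hrepval ψ
      have hqU : (e.symm ψ).2.1 * min (((e.symm ψ).1:ℝ)) (n:ℝ)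
          < (n:ℝ) * ((e.symm ψ).2.1 * 1) := by
        have h2 := hψ
        rw [hU, mem_setOf_eq, hv (SO13.clampS n), hv (SO13.cS 1)] at h2
        exact h2
      have hq1n : (((e.symm ψ).1):ℝ) < n := by
        rw [mul_one] at hqU
        by_contra hge
        push_neg at hge
        rw [min_eq_right hge] at hqU
        have := (e.symm ψ).2.2
        nlinarith
      symm
      apply Prod.ext
      · show (e.symm ψ).1 = Real.toNNReal (ψ.1.1 (SO13.clampS n) / ψ.1.1 (SO13.cS 1))
        rw [hv (SO13.clampS n), hv (SO13.cS 1)]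
        show (e.symm ψ).1 = Real.toNNReal
          ((e.symm ψ).2.1 * min (((e.symm ψ).1:ℝ)) (n:ℝ) / ((e.symm ψ).2.1 * 1))
        rw [min_eq_left hq1n.le, mul_one,
          mul_div_cancel_left₀ _ (ne_of_gt (e.symm ψ).2.2)]
        exact (Real.toNNReal_coe).symm
      · apply Subtype.ext
        show (e.symm ψ).2.1 = ψ.1.1 (SO13.cS 1)
        rw [hv (SO13.cS 1)]
        show (e.symm ψ).2.1 = (e.symm ψ).2.1 * ((SO13.cS 1).1 (e.symm ψ).1)
        simp [SO13.cS]
    exact (hcontF.continuousAt).congr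
      (Filter.eventuallyEq_of_mem (hUopen.mem_nhds hmemU) heqU)
  let H : NNReal × {c : ℝ // 0 < c} ≃ₜ {φ : HSO // φ.1 ≠ 0} :=
    { toEquiv := e, continuous_toFun := hcontΨ, continuous_invFun := hcontInv }
  refine ⟨H.symm, ?_⟩
  intro ψ x c hc hrepψ
  show H.symm ψ = (x, ⟨c, hc⟩)
  have h1 : ψ = H (x, ⟨c, hc⟩) := by
    apply Subtype.ext; apply Subtype.ext
    funext f
    exact hrepψ f
  rw [h1]
  exact H.symm_apply_apply _
end
end

section
/- The evaluation map δ : [0,∞) → H(SO), x ↦ δ_x, is a topological embedding onto the set K(SO) = {φ ∈ H(SO) : φ(1) = 1}, and K(SO) equals exactly δ([0,∞)). -/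
open Filter Metric Set

noncomputable section

lemma so_one : SO (fun _ : NNReal => (1 : ℝ)) := by
  refine ⟨continuous_const, ?_⟩
  intro R hR ε hε
  refine ⟨1, one_pos, fun x hx => ?_⟩
  have hsub : ((fun _ : NNReal => (1 : ℝ)) '' Set.Icc x (x + R)).Subsingleton := by
    rintro y ⟨_, _, rfl⟩ z ⟨_, _, rfl⟩; rfl
  simpa [Metric.diam_subsingleton hsub] using hε

/-- The constant function `1` as an element of `SO`. -/
def oneSOF : SOF := ⟨fun _ => (1 : ℝ), so_one⟩

lemma so_const (c : ℝ) : SO (fun _ : NNReal => c) := by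
  refine ⟨continuous_const, ?_⟩
  intro R hR ε hε
  refine ⟨1, one_pos, fun x hx => ?_⟩
  have hsub : ((fun _ : NNReal => c) '' Set.Icc x (x + R)).Subsingleton := by
    rintro y ⟨_, _, rfl⟩ z ⟨_, _, rfl⟩; rfl
  simpa [Metric.diam_subsingleton hsub] using hε

lemma so_comp1 {f : NNReal → ℝ} (hf : SO f) (h : ℝ → ℝ)
    (hl : ∀ a b : ℝ, |h a - h b| ≤ |a - b|) : SO (fun x => h (f x)) := by
  have hlip : LipschitzWith 1 h := by
    apply LipschitzWith.of_dist_le_mul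
    intro a b
    rw [Real.dist_eq, Real.dist_eq, NNReal.coe_one, one_mul]
    exact hl a b
  refine ⟨hlip.continuous.comp hf.1, ?_⟩
  intro R hR ε hε
  obtain ⟨M, hM, hd⟩ := hf.2 R hR ε hε
  refine ⟨M, hM, fun x hx => ?_⟩
  have hb : Bornology.IsBounded (f '' Set.Icc x (x + R)) :=
    (isCompact_Icc.image hf.1).isBounded
  have hle : Metric.diam ((fun y => h (f y)) '' Set.Icc x (x + R)) ≤
      Metric.diam (f '' Set.Icc x (x + R)) := by
    apply Metric.diam_le_of_forall_dist_le Metric.diam_nonneg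
    rintro _ ⟨a, ha, rfl⟩ _ ⟨b, hb', rfl⟩
    calc dist (h (f a)) (h (f b)) ≤ dist (f a) (f b) := by
          rw [Real.dist_eq, Real.dist_eq]; exact hl _ _
      _ ≤ _ := Metric.dist_le_diam_of_mem hb ⟨a, ha, rfl⟩ ⟨b, hb', rfl⟩
  exact lt_of_le_of_lt hle (hd x hx)

lemma so_sup {f g : NNReal → ℝ} (hf : SO f) (hg : SO g) : SO (f ⊔ g) := by
  refine ⟨hf.1.max hg.1, ?_⟩
  intro R hR ε hε
  obtain ⟨M, hM, hdf⟩ := hf.2 R hR ε hε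
  obtain ⟨N, hN, hdg⟩ := hg.2 R hR ε hε
  refine ⟨M ⊔ N, lt_of_lt_of_le hM le_sup_left, fun x hx => ?_⟩
  have hxM : M < x := lt_of_le_of_lt le_sup_left hx
  have hxN : N < x := lt_of_le_of_lt le_sup_right hx
  have hbf : Bornology.IsBounded (f '' Set.Icc x (x + R)) :=
    (isCompact_Icc.image hf.1).isBounded
  have hbg : Bornology.IsBounded (g '' Set.Icc x (x + R)) :=
    (isCompact_Icc.image hg.1).isBounded
  have hle : Metric.diam ((f ⊔ g) '' Set.Icc x (x + R)) ≤
      max (Metric.diam (f '' Set.Icc x (x + R))) (Metric.diam (g '' Set.Icc x (x + R))) := by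
    apply Metric.diam_le_of_forall_dist_le (le_max_of_le_left Metric.diam_nonneg)
    rintro _ ⟨a, ha, rfl⟩ _ ⟨b, hb', rfl⟩
    simp only [Pi.sup_apply, Real.dist_eq]
    refine le_trans (abs_max_sub_max_le_max _ _ _ _) (max_le_max ?_ ?_)
    · exact le_of_eq (Real.dist_eq _ _).symm |>.trans
        (Metric.dist_le_diam_of_mem hbf ⟨a, ha, rfl⟩ ⟨b, hb', rfl⟩)
    · exact le_of_eq (Real.dist_eq _ _).symm |>.trans
        (Metric.dist_le_diam_of_mem hbg ⟨a, ha, rfl⟩ ⟨b, hb', rfl⟩)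
  exact lt_of_le_of_lt hle (max_lt (hdf x hxM) (hdg x hxN))

lemma so_sqrt : SO (fun x : NNReal => Real.sqrt x) := by
  refine ⟨Real.continuous_sqrt.comp NNReal.continuous_coe, ?_⟩
  intro R hR ε hε
  refine ⟨Real.toNNReal ((R / (2 * ε)) ^ 2) + 1,
    lt_of_lt_of_le one_pos le_add_self, fun x hx => ?_⟩
  have hx' : ((R : ℝ) / (2 * ε)) ^ 2 < (x : ℝ) := by
    have h1 : (Real.toNNReal ((R / (2 * ε)) ^ 2) : ℝ) < (x : ℝ) :=
      NNReal.coe_lt_coe.2 (lt_of_le_of_lt (le_add_right le_rfl) hx)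
    exact lt_of_le_of_lt (Real.le_coe_toNNReal _) h1
  have hsx : (R : ℝ) / (2 * ε) < Real.sqrt x := by
    rw [show ((R:ℝ) / (2*ε)) = Real.sqrt (((R:ℝ)/(2*ε))^2) from
      (Real.sqrt_sq (by positivity)).symm]
    exact Real.sqrt_lt_sqrt (by positivity) hx'
  have hkey : Real.sqrt ((x : ℝ) + R) < Real.sqrt x + ε := by
    rw [Real.sqrt_lt' (by positivity)]
    have hs : (R : ℝ) < 2 * ε * Real.sqrt x := by
      rw [div_lt_iff₀ (by positivity)] at hsx
      linarith [hsx]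
    nlinarith [Real.sq_sqrt (show (0:ℝ) ≤ (x:ℝ) from x.coe_nonneg), hε]
  have him : (fun y : NNReal => Real.sqrt y) '' Set.Icc x (x + R) ⊆
      Set.Icc (Real.sqrt x) (Real.sqrt ((x : ℝ) + R)) := by
    rintro _ ⟨a, ⟨ha1, ha2⟩, rfl⟩
    constructor
    · exact Real.sqrt_le_sqrt (NNReal.coe_le_coe.2 ha1)
    · apply Real.sqrt_le_sqrt
      have := NNReal.coe_le_coe.2 ha2
      rwa [NNReal.coe_add] at this
  calc Metric.diam ((fun y : NNReal => Real.sqrt y) '' Set.Icc x (x + R))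
      ≤ Metric.diam (Set.Icc (Real.sqrt x) (Real.sqrt ((x:ℝ) + R))) :=
        Metric.diam_mono him (Metric.isBounded_Icc _ _)
    _ = Real.sqrt ((x:ℝ) + R) - Real.sqrt x :=
        Real.diam_Icc (Real.sqrt_le_sqrt (by linarith [R.coe_nonneg]))
    _ < ε := by linarith

def constSOF (c : ℝ) : SOF := ⟨fun _ => c, so_const c⟩
def sqrtSOF : SOF := ⟨fun x => Real.sqrt x, so_sqrt⟩

variable {φ : SOF → ℝ}

lemma phi_const (hφ : IsHomS φ) (h1 : φ oneSOF = 1) (c : ℝ) : φ (constSOF c) = c := by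
  have := hφ.1 oneSOF oneSOF (constSOF c) c 0 (by
    funext y; simp [constSOF, oneSOF])
  rw [this, h1]; ring

lemma phi_ge (hφ : IsHomS φ) (h1 : φ oneSOF = 1) (f : SOF) (c : ℝ)
    (hc : ∀ y, c ≤ f.1 y) : c ≤ φ f := by
  have h := hφ.2.1 f (constSOF c) f (by
    funext y
    exact (sup_eq_left.2 (hc y)).symm)
  rw [phi_const hφ h1] at h
  calc c ≤ φ f ⊔ c := le_sup_right
    _ = φ f := h.symm

lemma phi_A (hφ : IsHomS φ) (h1 : φ oneSOF = 1) (g : SOF) :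
    ∃ A : SOF, (∀ y, A.1 y = min |g.1 y - φ g| 1) ∧ φ A = 0 := by
  set t := φ g with ht
  have hd : SO (fun y => g.1 y - t) := so_comp1 g.2 (fun a => a - t) (by
    intro a b; simp)
  have hnd : SO (fun y => -(g.1 y - t)) := so_comp1 g.2 (fun a => -(a - t)) (by
    intro a b
    have : -(a - t) - -(b - t) = -(a - b) := by ring
    rw [this, abs_neg])
  have hab : SO (fun y => |g.1 y - t|) := so_comp1 g.2 (fun a => |a - t|) (by
    intro a b
    have h2 : a - t - (b - t) = a - b := by ring
    have h3 := abs_abs_sub_abs_le_abs_sub (a - t) (b - t)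
    rwa [h2] at h3)
  have hA : SO (fun y => min |g.1 y - t| 1) := by
    have := so_comp1 hab (fun a => min a 1) (by
      intro a b
      have h := abs_min_sub_min_le_max a 1 b 1
      simpa using h)
    exact this
  set D : SOF := ⟨fun y => g.1 y - t, hd⟩
  set ND : SOF := ⟨fun y => -(g.1 y - t), hnd⟩
  set AB : SOF := ⟨fun y => |g.1 y - t|, hab⟩
  set A : SOF := ⟨fun y => min |g.1 y - t| 1, hA⟩
  have hD0 : φ D = 0 := by
    have := hφ.1 g oneSOF D 1 (-t) (by
      funext y; simp [D, oneSOF]; ring)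
    rw [this, h1, ← ht]; ring
  have hND0 : φ ND = 0 := by
    have := hφ.1 D D ND (-1) 0 (by
      funext y; simp [D, ND])
    rw [this, hD0]; ring
  have hAB0 : φ AB = 0 := by
    have := hφ.2.1 D ND AB (by
      funext y
      simp only [AB, D, ND, Pi.sup_apply]
      exact abs_eq_max_neg)
    rw [this, hD0, hND0]; simp
  refine ⟨A, fun y => rfl, ?_⟩
  have := hφ.2.2 AB oneSOF A (by
    funext y; simp [A, AB, oneSOF])
  rw [this, hAB0, h1]
  simp

lemma exists_point (hφ : IsHomS φ) (h1 : φ oneSOF = 1) :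
    ∃ x : NNReal, ∀ g : SOF, g.1 x = φ g := by
  by_contra hcon
  push_neg at hcon
  set t := φ sqrtSOF with ht
  have ht0 : 0 ≤ t := phi_ge hφ h1 sqrtSOF 0 (fun y => Real.sqrt_nonneg _)
  obtain ⟨h0, h0def, h0zero⟩ := phi_A hφ h1 sqrtSOF
  choose gg hgg using hcon
  have hAex : ∀ x : NNReal, ∃ A : SOF,
      (∀ y, A.1 y = min |(gg x).1 y - φ (gg x)| 1) ∧ φ A = 0 :=
    fun x => phi_A hφ h1 (gg x)
  choose AA hAdef hAzero using hAex
  set T : NNReal := Real.toNNReal ((t + 1) ^ 2) with hT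
  set C : Set NNReal := Set.Icc 0 T with hC
  have hCcomp : IsCompact C := isCompact_Icc
  have hposA : ∀ x : NNReal, 0 < (AA x).1 x := by
    intro x
    rw [hAdef x x]
    exact lt_min (abs_pos.2 (sub_ne_zero.2 (hgg x))) one_pos
  have hcov : C ⊆ ⋃ x : NNReal, {y | 0 < (AA x).1 y} :=
    fun y _ => Set.mem_iUnion.2 ⟨y, hposA y⟩
  obtain ⟨s, hs⟩ := hCcomp.elim_finite_subcover (fun x => {y | 0 < (AA x).1 y})
    (fun x => isOpen_lt continuous_const (AA x).2.1) hcov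
  have hbuild : ∀ s' : Finset NNReal, ∃ F : SOF, φ F = 0 ∧ (∀ y, h0.1 y ≤ F.1 y) ∧
      ∀ i ∈ s', ∀ y, (AA i).1 y ≤ F.1 y := by
    intro s'
    induction s' using Finset.cons_induction with
    | empty => exact ⟨h0, h0zero, fun y => le_rfl, by simp⟩
    | cons a s'' ha ih =>
      obtain ⟨F, hF0, hFb, hFs⟩ := ih
      refine ⟨⟨F.1 ⊔ (AA a).1, so_sup F.2 (AA a).2⟩, ?_, ?_, ?_⟩
      · have := hφ.2.1 F (AA a) ⟨F.1 ⊔ (AA a).1, so_sup F.2 (AA a).2⟩ rfl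
        rw [this, hF0, hAzero a]; simp
      · intro y
        simp only [Pi.sup_apply]
        exact le_trans (hFb y) le_sup_left
      · intro i hi y
        simp only [Pi.sup_apply]
        rcases Finset.mem_cons.1 hi with rfl | hi'
        · exact le_sup_right
        · exact le_trans (hFs i hi' y) le_sup_left
  obtain ⟨F, hF0, hFb, hFs⟩ := hbuild s
  have hoff : ∀ y : NNReal, y ∉ C → (1 : ℝ) ≤ F.1 y := by
    intro y hy
    have hTy : T < y := by
      by_contra h
      exact hy ⟨zero_le, le_of_not_gt h⟩
    have hy2 : (t + 1) ^ 2 ≤ (y : ℝ) := by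
      have hcoe : (T : ℝ) = (t + 1) ^ 2 := Real.coe_toNNReal _ (by positivity)
      have := NNReal.coe_lt_coe.2 hTy
      rw [hcoe] at this
      linarith
    have hsy : t + 1 ≤ Real.sqrt y := by
      rw [show t + 1 = Real.sqrt ((t + 1) ^ 2) from (Real.sqrt_sq (by positivity)).symm]
      exact Real.sqrt_le_sqrt hy2
    have h01 : h0.1 y = 1 := by
      rw [h0def y, ← ht]
      simp only [sqrtSOF]
      refine min_eq_right ?_
      rw [abs_of_nonneg (by linarith)]
      linarith
    rw [← h01]; exact hFb y
  have hne : C.Nonempty := ⟨0, le_rfl, zero_le⟩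
  obtain ⟨y0, hy0C, hy0min⟩ := hCcomp.exists_isMinOn hne F.2.1.continuousOn
  have hy0pos : 0 < F.1 y0 := by
    have := hs hy0C
    rw [Set.mem_iUnion₂] at this
    obtain ⟨i, hi, hyi⟩ := this
    exact lt_of_lt_of_le hyi (hFs i hi y0)
  have hcpos : 0 < min 1 (F.1 y0) := lt_min one_pos hy0pos
  have hlb : ∀ y, min 1 (F.1 y0) ≤ F.1 y := by
    intro y
    by_cases hy : y ∈ C
    · exact le_trans (min_le_right _ _) (hy0min hy)
    · exact le_trans (min_le_left _ _) (hoff y hy)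
  have := phi_ge hφ h1 F _ hlb
  rw [hF0] at this
  linarith


theorem stmt_14 :
    Topology.IsEmbedding (fun x : NNReal => evalHom x) ∧
    Set.range (fun x : NNReal => evalHom x) = {φ : HSO | φ.1 oneSOF = 1} := by
  constructor
  · have hcont : Continuous (fun x : NNReal => evalHom x) := by
      unfold evalHom
      exact Continuous.subtype_mk (continuous_pi fun f => f.2.1) _
    have hev : Continuous (fun ψ : HSO => ψ.1 sqrtSOF) :=
      (continuous_apply sqrtSOF).comp continuous_subtype_val
    have hsq : Topology.IsEmbedding
        ((fun ψ : HSO => ψ.1 sqrtSOF) ∘ (fun x : NNReal => evalHom x)) := by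
      have h1 : Topology.IsEmbedding ((↑) : NNReal → ℝ) :=
        Isometry.isEmbedding fun _ => congrFun rfl
      have h2 : Topology.IsEmbedding (⇑NNReal.sqrt) :=
        NNReal.sqrt.toHomeomorph.isEmbedding
      have heq : ((fun ψ : HSO => ψ.1 sqrtSOF) ∘ (fun x : NNReal => evalHom x)) =
          ((↑) : NNReal → ℝ) ∘ ⇑NNReal.sqrt := by
        funext x
        simp [Function.comp, evalHom, sqrtSOF, Real.coe_sqrt]
      rw [heq]
      exact h1.comp h2
    exact Topology.IsEmbedding.of_comp hcont hev hsq
  · ext ψ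
    simp only [Set.mem_range, Set.mem_setOf_eq]
    constructor
    · rintro ⟨x, rfl⟩
      rfl
    · intro hψ
      obtain ⟨x, hx⟩ := exists_point ψ.2 hψ
      exact ⟨x, Subtype.ext (funext fun g => hx g)⟩
end
end

section
/- The inverse map [0,∞) × (0,∞) → H(SO), (x, s) ↦ s · δ_x, is continuous with respect to the product topology on ℝ^SO restricted to H(SO). -/
open Filter Metric Set

noncomputable section

/-- The homomorphism `s · δ_x`. -/
def scaledEval (x : NNReal) (s : ℝ) (hs : 0 < s) : HSO :=
  ⟨fun f => s * f.1 x, by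
    refine ⟨?_, ?_, ?_⟩
    · intro f g h c d he; simp [he]; ring
    · intro f g h he
      simp only [he, Pi.sup_apply]
      exact mul_max_of_nonneg _ _ hs.le
    · intro f g h he
      simp only [he, Pi.inf_apply]
      exact mul_min_of_nonneg _ _ hs.le⟩

theorem stmt_16 :
    Continuous (fun p : NNReal × {s : ℝ // 0 < s} => scaledEval p.1 p.2.1 p.2.2) := by
  apply Continuous.subtype_mk
  apply continuous_pi
  intro f
  exact (continuous_subtype_val.comp continuous_snd).mul (f.2.1.comp continuous_fst)
end
end
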